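/- arXiv:2304.02345 — 7 statements merged into one kernel-verified Lean document; each statement's English description precedes it below -/
import Mathlib

section
/- For all real α, the sum over j = 1, 2, 3 of (3 sin²(α + 2πj/3) − cos²(α + 2πj/3)) · log |3 sin²(α + 2πj/3) − cos²(α + 2πj/3)| is at most 3 log 3, where by convention t · log|t| = 0 when t = 0. -/
open Real

-- numeric log facts
lemma hlog32 : (1:ℝ)/3 ≤ Real.log (3/2) := by
  rw [Real.le_log_iff_exp_le (by norm_num)]
  have h6 : Real.exp (1/6) ≤ 6/5 := by
    have h := Real.add_one_le_exp (-(1/6) : ℝ)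
    rw [Real.exp_neg] at h
    have hp := Real.exp_pos (1/6 : ℝ)
    nlinarith [mul_inv_cancel₀ hp.ne']
  have : Real.exp (1/3 : ℝ) = Real.exp (1/6) * Real.exp (1/6) := by
    rw [← Real.exp_add]; norm_num
  nlinarith [Real.exp_pos (1/6 : ℝ)]

lemma hlog158 : (8:ℝ)/15 ≤ Real.log (15/8) := by
  rw [Real.le_log_iff_exp_le (by norm_num)]
  have h45 : Real.exp (8/45) ≤ 45/37 := by
    have h := Real.add_one_le_exp (-(8/45) : ℝ)
    rw [Real.exp_neg] at h
    have hp := Real.exp_pos (8/45 : ℝ)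
    nlinarith [mul_inv_cancel₀ hp.ne']
  have he : Real.exp (8/15 : ℝ) = Real.exp (8/45) * Real.exp (8/45) * Real.exp (8/45) := by
    rw [← Real.exp_add, ← Real.exp_add]; norm_num
  nlinarith [Real.exp_pos (8/45 : ℝ)]

-- quadratic upper bound on [0,3]
lemma L1 (t : ℝ) (h0 : 0 ≤ t) (h3 : t ≤ 3) :
    t * Real.log t ≤ t^2/3 + (Real.log 3 - 1) * t := by
  rcases eq_or_lt_of_le h0 with h | h
  · simp [← h]
  · have hd : Real.log (t/3) ≤ t/3 - 1 := Real.log_le_sub_one_of_pos (by positivity)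
    rw [Real.log_div h.ne' (by norm_num)] at hd
    nlinarith [h]

set_option maxHeartbeats 2000000 in
lemma key_sorted (a b c : ℝ) (hab : a ≤ b) (hbc : b ≤ c)
    (h1 : a + b + c = 3) (h2 : a^2 + b^2 + c^2 = 9) :
    a * Real.log |a| + b * Real.log |b| + c * Real.log |c| ≤ 3 * Real.log 3 := by
  have hc3 : c ≤ 3 := by nlinarith [sq_nonneg (a - b)]
  have ha1 : -1 ≤ a := by nlinarith [sq_nonneg (b - c)]
  have hb0 : 0 ≤ b := by nlinarith
  have hc0 : 0 ≤ c := le_trans hb0 hbc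
  rcases le_or_gt 0 a with ha0 | ha0
  · -- all nonnegative
    rw [abs_of_nonneg ha0, abs_of_nonneg hb0, abs_of_nonneg hc0]
    have Ba := L1 a ha0 (by linarith)
    have Bb := L1 b hb0 (by linarith)
    have Bc := L1 c hc0 hc3
    have hlin : (Real.log 3 - 1) * a + (Real.log 3 - 1) * b + (Real.log 3 - 1) * c
        = 3 * Real.log 3 - 3 := by linear_combination (Real.log 3 - 1) * h1
    linarith
  · -- a < 0
    obtain ⟨x, hxdef⟩ : ∃ x : ℝ, x = -a := ⟨-a, rfl⟩
    have hx0 : 0 < x := by rw [hxdef]; linarith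
    have hx1 : x ≤ 1 := by rw [hxdef]; linarith
    have hc : c = 3 + x - b := by rw [hxdef]; linarith
    -- core polynomial constraint
    have he : x^2 + b^2 + 3*x - 3*b - x*b = 0 := by
      rw [hxdef]; nlinarith [h2, h1]
    have hxb : x ≤ b := by nlinarith [sq_nonneg (x - b), sq_nonneg b]
    have hb0' : 0 < b := lt_of_lt_of_le hx0 hxb
    have hb2 : b ≤ 2 := by linarith
    have habs : |a| = x := by rw [abs_of_neg ha0, hxdef]
    have hbabs : |b| = b := abs_of_nonneg hb0
    have hcabs : |c| = c := abs_of_nonneg hc0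
    rw [habs, hbabs, hcabs]
    -- F1 : b log b + a log x ≤ (b - x)*(1 + log b)
    have hF1 : b * Real.log b + a * Real.log x ≤ (b - x) * (1 + Real.log b) := by
      have hd : Real.log b - Real.log x ≤ b/x - 1 := by
        have := Real.log_le_sub_one_of_pos (show (0:ℝ) < b/x by positivity)
        rwa [Real.log_div hb0'.ne' hx0.ne'] at this
      have hx' : x * (b/x - 1) = b - x := by field_simp
      have : x * (Real.log b - Real.log x) ≤ b - x := by
        calc x * (Real.log b - Real.log x) ≤ x * (b/x - 1) := by
              apply mul_le_mul_of_nonneg_left hd hx0.le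
          _ = b - x := hx'
      have haa : a * Real.log x = -(x * Real.log x) := by rw [hxdef]; ring
      nlinarith [this]
    -- F2
    have hF2 : c * Real.log c ≤ c^2/3 + (Real.log 3 - 1) * c := L1 c hc0 hc3
    -- F3 : log b ≤ log 3 - (b - x)/3
    have hF3 : Real.log b ≤ Real.log 3 - (b - x)/3 := by
      rcases le_or_gt b (8/5) with hcase | hcase
      · have hlb : Real.log b ≤ Real.log (8/5) := by
          apply Real.log_le_log hb0' hcase
        have hsplit : Real.log 3 = Real.log (15/8) + Real.log (8/5) := by
          rw [← Real.log_mul (by norm_num) (by norm_num)]; norm_num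
        have := hlog158
        have : (b - x)/3 ≤ 8/15 := by linarith
        linarith [hlog158]
      · -- 8/5 < b ≤ 2 : use x ≥ b - 1 hence (b-x) ≤ 1
        have hxe : x * (x + 3 - b) = b * (3 - b) := by linear_combination he
        have hx4 : b * (3 - b) ≤ x * (4 - b) := by
          nlinarith [hxe, mul_nonneg hx0.le (show (0:ℝ) ≤ 1 - x by linarith)]
        have hbx1 : b - x ≤ 1 := by
          by_contra hcon
          push_neg at hcon
          have hprod : 0 < (b - x - 1) * (4 - b) :=
            mul_pos (by linarith) (by linarith)
          have hexp : 0 < 4*b - b^2 - 4*x + x*b - 4 + b := by nlinarith [hprod]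
          have hexp2 : 3*b - b^2 - 4*x + x*b ≤ 0 := by nlinarith [hx4]
          linarith
        have hlb : Real.log b ≤ Real.log 2 := by
          apply Real.log_le_log hb0' hb2
        have hsplit : Real.log 3 = Real.log (3/2) + Real.log 2 := by
          rw [← Real.log_mul (by norm_num) (by norm_num)]; norm_num
        linarith [hlog32]
    -- combine
    have hmul : (b - x) * (1 + Real.log b) ≤ (b - x) * (1 + Real.log 3 - (b - x)/3) := by
      apply mul_le_mul_of_nonneg_left _ (by linarith : (0:ℝ) ≤ b - x)
      linarith
    have hc2 : c^2 = 9 - x^2 - b^2 := by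
      rw [hxdef]; linear_combination h2
    have hfin : (b - x) * (1 + Real.log 3 - (b - x)/3) + c^2/3 + (Real.log 3 - 1) * c
        = 3 * Real.log 3 := by
      rw [hc2, hc]; linear_combination (-2/3 : ℝ) * he
    linarith

lemma key (a b c : ℝ) (h1 : a + b + c = 3) (h2 : a^2 + b^2 + c^2 = 9) :
    a * Real.log |a| + b * Real.log |b| + c * Real.log |c| ≤ 3 * Real.log 3 := by
  rcases le_total a b with hab | hab <;> rcases le_total b c with hbc | hbc <;>
    rcases le_total a c with hac | hac
  · linarith [key_sorted a b c hab hbc (by linarith) (by linarith)]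
  · linarith [key_sorted a b c hab hbc (by linarith) (by linarith)]
  · linarith [key_sorted a c b hac (by linarith) (by linarith) (by linarith)]
  · linarith [key_sorted c a b (by linarith) hab (by linarith) (by linarith)]
  · linarith [key_sorted b a c hab hac (by linarith) (by linarith)]
  · linarith [key_sorted b c a hbc hac (by linarith) (by linarith)]
  · linarith [key_sorted a c b hac hbc (by linarith) (by linarith)]
  · linarith [key_sorted c b a hbc hab (by linarith) (by linarith)]

lemma cos23 : Real.cos (2*π/3) = -(1/2) := by
  have h : 2*π/3 = π - π/3 := by ring
  rw [h, Real.cos_pi_sub, Real.cos_pi_div_three]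

lemma sin23 : Real.sin (2*π/3) = Real.sqrt 3 / 2 := by
  have h : 2*π/3 = π - π/3 := by ring
  rw [h, Real.sin_pi_sub, Real.sin_pi_div_three]

lemma cos43 : Real.cos (4*π/3) = -(1/2) := by
  have h : 4*π/3 = π + π/3 := by ring
  rw [h, Real.cos_add, Real.cos_pi, Real.sin_pi, Real.cos_pi_div_three]
  ring

lemma sin43 : Real.sin (4*π/3) = -(Real.sqrt 3 / 2) := by
  have h : 4*π/3 = π + π/3 := by ring
  rw [h, Real.sin_add, Real.cos_pi, Real.sin_pi, Real.sin_pi_div_three]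
  ring

theorem stmt2 (α : ℝ) :
    ∑ j ∈ Finset.range 3,
      (3 * sin (α + 2 * π * (j + 1) / 3) ^ 2 - cos (α + 2 * π * (j + 1) / 3) ^ 2) *
        Real.log |3 * sin (α + 2 * π * (j + 1) / 3) ^ 2 - cos (α + 2 * π * (j + 1) / 3) ^ 2|
      ≤ 3 * Real.log 3 := by
  rw [Finset.sum_range_succ, Finset.sum_range_succ, Finset.sum_range_succ,
    Finset.sum_range_zero]
  have e0 : α + 2 * π * (((0:ℕ):ℝ) + 1) / 3 = α + 2*π/3 := by push_cast; ring
  have e1 : α + 2 * π * (((1:ℕ):ℝ) + 1) / 3 = α + 4*π/3 := by push_cast; ring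
  have e2 : α + 2 * π * (((2:ℕ):ℝ) + 1) / 3 = α + 2*π := by push_cast; ring
  rw [e0, e1, e2, Real.sin_add_two_pi, Real.cos_add_two_pi]
  have h3 : Real.sqrt 3 ^ 2 = 3 := Real.sq_sqrt (by norm_num)
  have hpy : sin α ^ 2 + cos α ^ 2 = 1 := Real.sin_sq_add_cos_sq α
  have h1 : (3 * sin (α + 2*π/3) ^ 2 - cos (α + 2*π/3) ^ 2)
      + (3 * sin (α + 4*π/3) ^ 2 - cos (α + 4*π/3) ^ 2)
      + (3 * sin α ^ 2 - cos α ^ 2) = 3 := by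
    rw [Real.sin_add, Real.cos_add, Real.sin_add (y := 4*π/3), Real.cos_add (y := 4*π/3),
      cos23, sin23, cos43, sin43]
    linear_combination ((3/2) * cos α ^ 2 - (1/2) * sin α ^ 2) * h3 + 3 * hpy
  have h2 : (3 * sin (α + 2*π/3) ^ 2 - cos (α + 2*π/3) ^ 2) ^ 2
      + (3 * sin (α + 4*π/3) ^ 2 - cos (α + 4*π/3) ^ 2) ^ 2
      + (3 * sin α ^ 2 - cos α ^ 2) ^ 2 = 9 := by
    rw [Real.sin_add, Real.cos_add, Real.sin_add (y := 4*π/3), Real.cos_add (y := 4*π/3),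
      cos23, sin23, cos43, sin43]
    linear_combination
      (2 * ((3/4) * cos α ^ 2 - (1/4) * sin α ^ 2) *
          (2 * ((3/4) * sin α ^ 2 - (1/4) * cos α ^ 2)
            + ((3/4) * cos α ^ 2 - (1/4) * sin α ^ 2) * Real.sqrt 3 ^ 2
            + 3 * ((3/4) * cos α ^ 2 - (1/4) * sin α ^ 2))
        + 8 * sin α ^ 2 * cos α ^ 2) * h3
      + 9 * (sin α ^ 2 + cos α ^ 2 + 1) * hpy
  have hkey := key _ _ _ h1 h2
  linarith [hkey]
end

section
/- Let a_j := (1/3) − (2/3)cos(2α + 4πj/3) for j = 1, 2, 3 (indices mod 3) and b_j := (a_j + a_{j−1})/2. Then b₁ + b₂ + b₃ = 1, b₁² + b₂² + b₃² = 1/2, and each b_j is nonnegative. -/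
open Real

theorem stmt3 (α : ℝ) (a b : ℕ → ℝ)
    (ha : ∀ j, a j = 1 / 3 - (2 / 3) * cos (2 * α + 4 * π * j / 3))
    (ha0 : a 0 = a 3)
    (hb : ∀ j, b j = (a j + a (j - 1)) / 2) :
    b 1 + b 2 + b 3 = 1 ∧ b 1 ^ 2 + b 2 ^ 2 + b 3 ^ 2 = 1 / 2 ∧
      0 ≤ b 1 ∧ 0 ≤ b 2 ∧ 0 ≤ b 3 := by
  have h3 : Real.sqrt 3 ^ 2 = 3 := Real.sq_sqrt (by norm_num)
  have hpyth : sin (2*α) ^ 2 + cos (2*α) ^ 2 = 1 := sin_sq_add_cos_sq _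
  have ha1 : a 1 = 1/3 + cos (2*α)/3 - Real.sqrt 3 / 3 * sin (2*α) := by
    rw [ha 1]
    have h : (2*α + 4*π*(1:ℕ)/3) = (2*α + π/3) + π := by push_cast; ring
    rw [h, Real.cos_add_pi, Real.cos_add, Real.cos_pi_div_three, Real.sin_pi_div_three]
    ring
  have ha2 : a 2 = 1/3 + cos (2*α)/3 + Real.sqrt 3 / 3 * sin (2*α) := by
    rw [ha 2]
    have h : (2*α + 4*π*(2:ℕ)/3) = ((2*α - π/3) + π) + 2*π := by push_cast; ring
    rw [h, Real.cos_add_two_pi, Real.cos_add_pi, Real.cos_sub, Real.cos_pi_div_three,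
      Real.sin_pi_div_three]
    ring
  have ha3 : a 3 = 1/3 - 2/3 * cos (2*α) := by
    rw [ha 3]
    have h : (2*α + 4*π*(3:ℕ)/3) = (2*α + 2*π) + 2*π := by push_cast; ring
    rw [h, Real.cos_add_two_pi, Real.cos_add_two_pi]
  have hb1 : b 1 = 1/3 - cos (2*α)/6 - Real.sqrt 3 / 6 * sin (2*α) := by
    have : b 1 = (a 1 + a 0) / 2 := hb 1
    rw [this, ha0, ha1, ha3]; ring
  have hb2 : b 2 = 1/3 + cos (2*α)/3 := by
    have : b 2 = (a 2 + a 1) / 2 := hb 2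
    rw [this, ha1, ha2]; ring
  have hb3 : b 3 = 1/3 - cos (2*α)/6 + Real.sqrt 3 / 6 * sin (2*α) := by
    have : b 3 = (a 3 + a 2) / 2 := hb 3
    rw [this, ha2, ha3]; ring
  refine ⟨by rw [hb1, hb2, hb3]; ring, ?_, ?_, ?_, ?_⟩
  · rw [hb1, hb2, hb3]
    linear_combination (sin (2*α))^2/18 * h3 + (1/6) * hpyth
  · rw [hb1]
    nlinarith [sq_nonneg (Real.sqrt 3 * cos (2*α) - sin (2*α)), h3, hpyth,
      sq_nonneg (cos (2*α) + Real.sqrt 3 * sin (2*α) - 2)]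
  · rw [hb2]
    nlinarith [Real.neg_one_le_cos (2*α)]
  · rw [hb3]
    nlinarith [sq_nonneg (Real.sqrt 3 * cos (2*α) + sin (2*α)), h3, hpyth,
      sq_nonneg (cos (2*α) - Real.sqrt 3 * sin (2*α) - 2)]
end

section
/- For every δ > 0, one has 0 ≤ ∫₀¹ du / (√u · √(u + δ)) − log(4/δ) ≤ δ/2. -/
open Real MeasureTheory Set

/-!
The integrand is the derivative of `2 log (√u + √(u + δ))`, so the integral equals
`2 log (1 + √(1 + δ)) - log δ`, and its excess over `log (4 / δ)` is `2 log ((1 + s) / 2)` with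
`s = √(1 + δ) ≥ 1`. This is nonnegative, and by `log x ≤ x - 1` it is at most
`s - 1 ≤ δ / 2`.
-/

theorem hasDerivAt_two_mul_log_sqrt_add_sqrt {c u : ℝ} (hu : 0 < u) (huc : 0 < u + c) :
    HasDerivAt (fun x => 2 * log (√x + √(x + c))) (1 / (√u * √(u + c))) u := by
  have hsum : HasDerivAt (fun x => √x + √(x + c)) (1 / (2 * √u) + 1 / (2 * √(u + c))) u :=
    (hasDerivAt_sqrt hu.ne').add ((hasDerivAt_sqrt huc.ne').comp_add_const u c)
  have hu' : 0 < √u := sqrt_pos.2 hu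
  have huc' : 0 < √(u + c) := sqrt_pos.2 huc
  refine ((hsum.log (by positivity)).const_mul 2).congr_deriv ?_
  field_simp
  ring

theorem continuousOn_two_mul_log_sqrt_add_sqrt {c : ℝ} (hc : 0 < c) :
    ContinuousOn (fun x => 2 * log (√x + √(x + c))) (Ici 0) := by
  refine continuousOn_const.mul (ContinuousOn.log (by fun_prop) fun x hx => ?_)
  have : 0 < √(x + c) := sqrt_pos.2 (by linarith [mem_Ici.1 hx])
  positivity

theorem integral_Ioo_one_div_sqrt_mul_sqrt_add {b c : ℝ} (hb : 0 ≤ b) (hc : 0 < c) :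
    ∫ u in Ioo 0 b, 1 / (√u * √(u + c)) = 2 * log (√b + √(b + c)) - log c := by
  have hcont : ContinuousOn (fun x => 2 * log (√x + √(x + c))) (Icc 0 b) :=
    (continuousOn_two_mul_log_sqrt_add_sqrt hc).mono Icc_subset_Ici_self
  have hderiv : ∀ x ∈ Ioo 0 b, HasDerivAt (fun x => 2 * log (√x + √(x + c)))
      (1 / (√x * √(x + c))) x := fun x hx =>
    hasDerivAt_two_mul_log_sqrt_add_sqrt hx.1 (by linarith [hx.1])
  have hint : IntervalIntegrable (fun x => 1 / (√x * √(x + c))) volume 0 b :=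
    (intervalIntegrable_iff_integrableOn_Ioc_of_le hb).2
      (intervalIntegral.integrableOn_deriv_of_nonneg hcont hderiv fun x _ => by positivity)
  rw [← integral_Ioc_eq_integral_Ioo, ← intervalIntegral.integral_of_le hb,
    intervalIntegral.integral_eq_sub_of_hasDerivAt_of_le hb hcont hderiv hint]
  simp [log_sqrt hc.le, mul_div_cancel₀]

theorem stmt5 (δ : ℝ) (hδ : 0 < δ) :
    0 ≤ (∫ u in Set.Ioo (0:ℝ) 1, 1 / (Real.sqrt u * Real.sqrt (u + δ))) - Real.log (4 / δ) ∧
    (∫ u in Set.Ioo (0:ℝ) 1, 1 / (Real.sqrt u * Real.sqrt (u + δ))) - Real.log (4 / δ) ≤ δ / 2 := by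
  set s := √(1 + δ)
  have hs : 1 ≤ s := one_le_sqrt.2 (by linarith)
  have hexcess : (∫ u in Ioo (0:ℝ) 1, 1 / (√u * √(u + δ))) - log (4 / δ)
      = 2 * log ((1 + s) / 2) := by
    rw [integral_Ioo_one_div_sqrt_mul_sqrt_add zero_le_one hδ, sqrt_one,
      log_div (by norm_num) hδ.ne', log_div (by linarith) two_ne_zero,
      show (4 : ℝ) = 2 ^ 2 by norm_num, log_pow]
    push_cast
    ring
  rw [hexcess]
  constructor
  · linarith [log_nonneg (show 1 ≤ (1 + s) / 2 by linarith)]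
  · linarith [log_le_sub_one_of_pos (show 0 < (1 + s) / 2 by linarith),
      sqrt_one_add_le (show -1 ≤ δ by linarith)]
end

section
/- For all real a, b with 0 < a < 1 and 0 < b < 1, the absolute difference between ∫₀¹ dx / (√(1 − x²) √(a + 1 − x) √(b + 1 + x)) and ∫₀¹ dx / (√(1 − x²) √(a + 1 − x) √(1 + x)) is at most (b/2)(log(4/a) + a/2). -/
open Real MeasureTheory

/-!
On `[0, 1)` we have `√(1 - x²) ≥ √(1 - x)`, and `t ↦ 1 / √t` is `1/2`-Lipschitz on `[1, ∞)`, so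
the two integrands differ by at most `(b / 2) / (√(1 - x) √(a + 1 - x))`. This majorant has the
elementary antiderivative `-2 log (√(1 - x) + √(a + 1 - x))`, so its integral over `(0, 1)` is
`2 log (1 + √(a + 1)) - log a`, and `√(a + 1) ≤ 1 + a / 2` together with `log (1 + t) ≤ t` bound
this by `log (4 / a) + a / 2`.
-/

lemma one_div_sqrt_sub_one_div_sqrt_le {u v : ℝ} (hu : 1 ≤ u) (huv : u ≤ v) :
    1 / √u - 1 / √v ≤ (v - u) / 2 := by
  have hp : 1 ≤ √u := one_le_sqrt.2 hu
  have hpq : √u ≤ √v := sqrt_le_sqrt huv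
  have hpq1 : 1 ≤ √u * √v := one_le_mul_of_one_le_of_one_le hp (hp.trans hpq)
  have hprod : 2 ≤ (√v + √u) * (√u * √v) := by nlinarith
  calc 1 / √u - 1 / √v = (√v - √u) / (√u * √v) := by
        rw [div_sub_div _ _ (by linarith) (by linarith)]; ring
    _ ≤ (√v - √u) * (√v + √u) / 2 := by
      rw [div_le_div_iff₀ (by positivity) two_pos]
      nlinarith [mul_le_mul_of_nonneg_left hprod (sub_nonneg.2 hpq)]
    _ = (v - u) / 2 := by
      congr 1
      linear_combination sq_sqrt (by linarith : 0 ≤ v) - sq_sqrt (by linarith : 0 ≤ u)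

lemma integrableOn_one_div_sqrt_one_sub :
    IntegrableOn (fun x : ℝ ↦ 1 / √(1 - x)) (Set.Ioo 0 1) := by
  have h : IntervalIntegrable (fun x : ℝ ↦ (1 - x) ^ (-(1 / 2) : ℝ)) volume 0 1 := by
    simpa using ((intervalIntegral.intervalIntegrable_rpow' (a := 0) (b := 1)
      (r := -(1 / 2)) (by norm_num)).comp_sub_left 1).symm
  refine ((intervalIntegrable_iff_integrableOn_Ioo_of_le zero_le_one).1 h).congr_fun
    (fun x hx ↦ ?_) measurableSet_Ioo
  dsimp only
  rw [rpow_neg (by linarith [hx.2]), ← sqrt_eq_rpow, one_div]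

lemma hasDerivAt_neg_two_mul_log_sqrt_add_sqrt {c d x : ℝ} (hc : x < c) (hd : x < d) :
    HasDerivAt (fun y ↦ -2 * log (√(c - y) + √(d - y))) (1 / (√(c - x) * √(d - x))) x := by
  have hs : 0 < √(c - x) := sqrt_pos.2 (by linarith)
  have ht : 0 < √(d - x) := sqrt_pos.2 (by linarith)
  have hsc := ((hasDerivAt_id' x).const_sub c).sqrt (sub_pos.2 hc).ne'
  have hsd := ((hasDerivAt_id' x).const_sub d).sqrt (sub_pos.2 hd).ne'
  refine (((hsc.add hsd).log (add_pos hs ht).ne').const_mul (-2)).congr_deriv ?_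
  simp only [Pi.add_apply]
  field_simp
  ring

lemma two_mul_log_one_add_sqrt_sub_log_le {a : ℝ} (ha : 0 < a) :
    2 * log (1 + √(a + 1)) - log a ≤ log (4 / a) + a / 2 := by
  have hsqrt : √(a + 1) ≤ 1 + a / 2 := sqrt_le_iff.2 ⟨by positivity, by nlinarith⟩
  have hlog : log (1 + √(a + 1)) ≤ log 2 + a / 4 :=
    calc log (1 + √(a + 1)) ≤ log (2 * (1 + a / 4)) := log_le_log (by positivity) (by linarith)
      _ = log 2 + log (1 + a / 4) := log_mul two_ne_zero (by positivity)
      _ ≤ log 2 + a / 4 := by linarith [log_le_sub_one_of_pos (by positivity : 0 < 1 + a / 4)]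
  have hlog4 : log 4 = 2 * log 2 := by
    rw [show (4 : ℝ) = 2 ^ 2 by norm_num, log_pow, Nat.cast_ofNat]
  rw [log_div four_ne_zero ha.ne', hlog4]
  linarith

lemma integrableOn_one_div_sqrt_one_sub_mul_sqrt {a : ℝ} (ha : 0 < a) :
    IntegrableOn (fun x : ℝ ↦ 1 / (√(1 - x) * √(a + 1 - x))) (Set.Ioo 0 1) := by
  refine (integrableOn_one_div_sqrt_one_sub.const_mul (1 / √a)).mono'
    (Measurable.aestronglyMeasurable (by fun_prop))
    (ae_restrict_of_forall_mem measurableSet_Ioo fun x hx ↦ ?_)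
  rw [norm_of_nonneg (by positivity), mul_comm, ← one_div_mul_one_div]
  gcongr
  linarith [hx.2]

lemma integral_one_div_sqrt_one_sub_mul_sqrt {a : ℝ} (ha : 0 < a) :
    ∫ x in Set.Ioo 0 1, 1 / (√(1 - x) * √(a + 1 - x)) = 2 * log (1 + √(a + 1)) - log a := by
  have hcont : ContinuousOn (fun y ↦ -2 * log (√(1 - y) + √(a + 1 - y))) (Set.Icc 0 1) :=
    continuousOn_const.mul <| ContinuousOn.log (by fun_prop) fun x hx ↦
      (add_pos_of_nonneg_of_pos (sqrt_nonneg _) (sqrt_pos.2 (by linarith [hx.2]))).ne'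
  rw [← integral_Ioc_eq_integral_Ioo, ← intervalIntegral.integral_of_le zero_le_one,
    intervalIntegral.integral_eq_sub_of_hasDerivAt_of_le zero_le_one hcont
      (fun x hx ↦ hasDerivAt_neg_two_mul_log_sqrt_add_sqrt hx.2 (by linarith [hx.2]))
      ((intervalIntegrable_iff_integrableOn_Ioo_of_le zero_le_one).2
        (integrableOn_one_div_sqrt_one_sub_mul_sqrt ha))]
  simp [log_sqrt ha.le]
  ring

section Pointwise

variable {a b x : ℝ}

lemma one_div_sqrt_one_sub_sq_mul_sqrt_le (hx0 : 0 ≤ x) (hx1 : x < 1) :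
    1 / (√(1 - x ^ 2) * √(a + 1 - x)) ≤ 1 / (√(1 - x) * √(a + 1 - x)) := by
  rw [← one_div_mul_one_div, ← one_div_mul_one_div]
  gcongr
  nlinarith

lemma one_div_sqrt_one_sub_sq_mul_sqrt_mul_sqrt_le (hb : 0 ≤ b) (hx0 : 0 ≤ x) (hx1 : x < 1) :
    1 / (√(1 - x ^ 2) * √(a + 1 - x) * √(b + 1 + x)) ≤ 1 / (√(1 - x) * √(a + 1 - x)) := by
  have hB : 1 / √(b + 1 + x) ≤ 1 := by
    rw [div_le_one (by positivity)]
    exact one_le_sqrt.2 (by linarith)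
  rw [← one_div_mul_one_div _ (√(b + 1 + x))]
  calc _ ≤ 1 / (√(1 - x ^ 2) * √(a + 1 - x)) * 1 := by gcongr
    _ ≤ _ := (mul_one _).trans_le (one_div_sqrt_one_sub_sq_mul_sqrt_le hx0 hx1)

lemma abs_sub_one_div_sqrt_one_sub_sq_mul_sqrt_mul_sqrt_le (hb : 0 ≤ b) (hx0 : 0 ≤ x)
    (hx1 : x < 1) :
    |1 / (√(1 - x ^ 2) * √(a + 1 - x) * √(b + 1 + x)) -
        1 / (√(1 - x ^ 2) * √(a + 1 - x) * √(1 + x))| ≤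
      b / 2 * (1 / (√(1 - x) * √(a + 1 - x))) := by
  have hdiff : |1 / √(b + 1 + x) - 1 / √(1 + x)| ≤ b / 2 := by
    have := one_div_sqrt_sub_one_div_sqrt_le (u := 1 + x) (v := b + 1 + x) (by linarith)
      (by linarith)
    rw [abs_sub_comm, abs_of_nonneg (sub_nonneg.2 (one_div_le_one_div_of_le (by positivity)
      (sqrt_le_sqrt (by linarith))))]
    linarith
  rw [← one_div_mul_one_div _ (√(b + 1 + x)), ← one_div_mul_one_div _ (√(1 + x)), ← mul_sub,
    abs_mul, abs_of_nonneg (by positivity), mul_comm (b / 2)]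
  exact mul_le_mul (one_div_sqrt_one_sub_sq_mul_sqrt_le hx0 hx1) hdiff (abs_nonneg _)
    (by positivity)

end Pointwise

lemma integrableOn_one_div_sqrt_one_sub_sq_mul_sqrt_mul_sqrt {a b : ℝ} (ha : 0 < a)
    (hb : 0 ≤ b) :
    IntegrableOn (fun x ↦ 1 / (√(1 - x ^ 2) * √(a + 1 - x) * √(b + 1 + x))) (Set.Ioo 0 1) :=
  (integrableOn_one_div_sqrt_one_sub_mul_sqrt ha).mono'
    (Measurable.aestronglyMeasurable (by fun_prop))
    (ae_restrict_of_forall_mem measurableSet_Ioo fun x hx ↦ by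
      rw [norm_of_nonneg (by positivity)]
      exact one_div_sqrt_one_sub_sq_mul_sqrt_mul_sqrt_le hb hx.1.le hx.2)

theorem stmt8_general (a b : ℝ) (ha : 0 < a) (hb : 0 < b) :
    |(∫ x in Set.Ioo (0:ℝ) 1,
        1 / (Real.sqrt (1 - x ^ 2) * Real.sqrt (a + 1 - x) * Real.sqrt (b + 1 + x))) -
      ∫ x in Set.Ioo (0:ℝ) 1,
        1 / (Real.sqrt (1 - x ^ 2) * Real.sqrt (a + 1 - x) * Real.sqrt (1 + x))|
      ≤ (b / 2) * (Real.log (4 / a) + a / 2) := by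
  have hg := integrableOn_one_div_sqrt_one_sub_sq_mul_sqrt_mul_sqrt (b := 0) ha le_rfl
  simp only [zero_add] at hg
  rw [← integral_sub (integrableOn_one_div_sqrt_one_sub_sq_mul_sqrt_mul_sqrt ha hb.le) hg,
    ← norm_eq_abs]
  calc _ ≤ ∫ x in Set.Ioo (0:ℝ) 1, b / 2 * (1 / (√(1 - x) * √(a + 1 - x))) :=
        norm_integral_le_of_norm_le ((integrableOn_one_div_sqrt_one_sub_mul_sqrt ha).const_mul _)
          (ae_restrict_of_forall_mem measurableSet_Ioo fun x hx ↦
            abs_sub_one_div_sqrt_one_sub_sq_mul_sqrt_mul_sqrt_le hb.le hx.1.le hx.2)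
    _ = b / 2 * (2 * log (1 + √(a + 1)) - log a) := by
        rw [integral_const_mul, integral_one_div_sqrt_one_sub_mul_sqrt ha]
    _ ≤ _ := mul_le_mul_of_nonneg_left (two_mul_log_one_add_sqrt_sub_log_le ha) (by positivity)

theorem stmt8 (a b : ℝ) (ha : 0 < a) (ha1 : a < 1) (hb : 0 < b) (hb1 : b < 1) :
    |(∫ x in Set.Ioo (0:ℝ) 1,
        1 / (Real.sqrt (1 - x ^ 2) * Real.sqrt (a + 1 - x) * Real.sqrt (b + 1 + x))) -
      ∫ x in Set.Ioo (0:ℝ) 1,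
        1 / (Real.sqrt (1 - x ^ 2) * Real.sqrt (a + 1 - x) * Real.sqrt (1 + x))|
      ≤ (b / 2) * (Real.log (4 / a) + a / 2) :=
  stmt8_general a b ha hb
end

section
/- For every real a with 0 < a < 1, |∫₀¹ dx / ((1 + x)√(1 − x)√(a + 1 − x)) − (1/2) log(8/a)| ≤ (a/2) log(1 + 1/a). -/
/-!
Since `1 / (1 + x) = 1 / 2 + (1 - x) / (2 * (1 + x))`, the integrand splits as
`1 / (2√(1-x)√(a+1-x)) + 1 / (2(1+x)) - sqrtDefect a x`. The first two terms integrate in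
closed form (an antiderivative of the first is `-log (√(1-x) + √(a+1-x))`) to
`log (1 + √(1+a)) - (log a) / 2 + (log 2) / 2`, so the quantity inside the absolute value is
`log ((1 + √(1+a)) / 2) - ∫ sqrtDefect a`. Both terms lie in `[0, (a/2) log (1 + 1/a)]`:
the first is at most `a / 4 ≤ (a/2) log 2`, and the defect is at most `a / (2(a+1-x))`,
whose integral over `(0, 1)` is exactly `(a/2) log (1 + 1/a)`.
-/

open Real MeasureTheory Set

section FTC

variable {f F : ℝ → ℝ} {a b : ℝ}

theorem integrableOn_Ioo_of_hasDerivAt_of_nonneg (hcont : ContinuousOn F (Icc a b))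
    (hderiv : ∀ x ∈ Ioo a b, HasDerivAt F (f x) x) (hf : ∀ x ∈ Ioo a b, 0 ≤ f x) :
    IntegrableOn f (Ioo a b) :=
  (intervalIntegral.integrableOn_deriv_of_nonneg hcont hderiv hf).mono_set Ioo_subset_Ioc_self

theorem integral_Ioo_eq_sub_of_hasDerivAt_of_nonneg (hab : a ≤ b)
    (hcont : ContinuousOn F (Icc a b)) (hderiv : ∀ x ∈ Ioo a b, HasDerivAt F (f x) x)
    (hf : ∀ x ∈ Ioo a b, 0 ≤ f x) : ∫ x in Ioo a b, f x = F b - F a := by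
  rw [← integral_Ioc_eq_integral_Ioo, ← intervalIntegral.integral_of_le hab]
  exact intervalIntegral.integral_eq_sub_of_hasDerivAt_of_le hab hcont hderiv
    ((intervalIntegrable_iff_integrableOn_Ioc_of_le hab).2
      (intervalIntegral.integrableOn_deriv_of_nonneg hcont hderiv hf))

end FTC

theorem hasDerivAt_sqrt_const_sub {c x : ℝ} (hx : x < c) :
    HasDerivAt (fun y => √(c - y)) (-1 / (2 * √(c - x))) x := by
  simpa using ((hasDerivAt_id' x).const_sub c).sqrt (sub_pos.2 hx).ne'

theorem hasDerivAt_neg_log_sqrt_add_sqrt {p q x : ℝ} (hp : x < p) (hq : x < q) :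
    HasDerivAt (fun y => -log (√(p - y) + √(q - y))) (1 / (2 * √(p - x) * √(q - x))) x := by
  have hs : 0 < √(p - x) := sqrt_pos.2 (sub_pos.2 hp)
  have ht : 0 < √(q - x) := sqrt_pos.2 (sub_pos.2 hq)
  refine (((hasDerivAt_sqrt_const_sub hp).add (hasDerivAt_sqrt_const_sub hq)).log
    (by positivity : 0 < √(p - x) + √(q - x)).ne').neg.congr_deriv ?_
  rw [Pi.add_apply]
  field_simp
  ring

section Integrals

variable {a : ℝ}

theorem continuousOn_neg_log_sqrt_add_sqrt (ha : 0 < a) :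
    ContinuousOn (fun y => -log (√(1 - y) + √(a + 1 - y))) (Icc 0 1) := by
  refine (ContinuousOn.log (by fun_prop) fun y hy => ?_).neg
  have : 0 < √(a + 1 - y) := sqrt_pos.2 (by linarith [hy.2])
  positivity

theorem hasDerivAt_neg_log_sqrt_one_sub_add_sqrt {x : ℝ} (ha : 0 < a) (hx : x < 1) :
    HasDerivAt (fun y => -log (√(1 - y) + √(a + 1 - y)))
      (1 / (2 * √(1 - x) * √(a + 1 - x))) x :=
  hasDerivAt_neg_log_sqrt_add_sqrt hx (by linarith)

theorem integrableOn_one_div_two_mul_sqrt_mul_sqrt (ha : 0 < a) :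
    IntegrableOn (fun x => 1 / (2 * √(1 - x) * √(a + 1 - x))) (Ioo 0 1) :=
  integrableOn_Ioo_of_hasDerivAt_of_nonneg (continuousOn_neg_log_sqrt_add_sqrt ha)
    (fun _ hx => hasDerivAt_neg_log_sqrt_one_sub_add_sqrt ha hx.2) fun _ _ => by positivity

theorem integral_one_div_two_mul_sqrt_mul_sqrt (ha : 0 < a) :
    ∫ x in Ioo (0 : ℝ) 1, 1 / (2 * √(1 - x) * √(a + 1 - x)) =
      log (1 + √(1 + a)) - log a / 2 := by
  rw [integral_Ioo_eq_sub_of_hasDerivAt_of_nonneg zero_le_one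
    (continuousOn_neg_log_sqrt_add_sqrt ha)
    (fun _ hx => hasDerivAt_neg_log_sqrt_one_sub_add_sqrt ha hx.2) fun _ _ => by positivity]
  simp only [sub_self, sub_zero, add_sub_cancel_right, sqrt_zero, sqrt_one, zero_add]
  rw [log_sqrt ha.le, add_comm a]
  ring

theorem integral_one_div_two_mul_one_add :
    ∫ x in Ioo (0 : ℝ) 1, 1 / (2 * (1 + x)) = log 2 / 2 := by
  have hderiv (x : ℝ) (hx : x ∈ Ioo (0 : ℝ) 1) :
      HasDerivAt (fun y => log (1 + y) / 2) (1 / (2 * (1 + x))) x := by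
    have : 0 < 1 + x := by linarith [hx.1]
    refine (((hasDerivAt_id' x).const_add 1).log this.ne').div_const 2 |>.congr_deriv ?_
    field_simp
  rw [integral_Ioo_eq_sub_of_hasDerivAt_of_nonneg zero_le_one
    (ContinuousOn.div_const (ContinuousOn.log (by fun_prop) fun y hy => by linarith [hy.1]) _)
    hderiv fun x hx => one_div_nonneg.2 (by linarith [hx.1])]
  norm_num

theorem integrableOn_div_two_mul_add_one_sub (ha : 0 < a) :
    IntegrableOn (fun x => a / (2 * (a + 1 - x))) (Ioo 0 1) := by
  refine (ContinuousOn.integrableOn_Icc ?_).mono_set Ioo_subset_Icc_self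
  exact continuousOn_const.div (by fun_prop) fun y hy => by linarith [hy.2]

theorem integral_div_two_mul_add_one_sub (ha : 0 < a) :
    ∫ x in Ioo (0 : ℝ) 1, a / (2 * (a + 1 - x)) = a / 2 * log (1 + 1 / a) := by
  have hderiv (x : ℝ) (hx : x ∈ Ioo (0 : ℝ) 1) :
      HasDerivAt (fun y => -(a / 2) * log (a + 1 - y)) (a / (2 * (a + 1 - x))) x := by
    have : 0 < a + 1 - x := by linarith [hx.2]
    refine (((hasDerivAt_id' x).const_sub (a + 1)).log this.ne').const_mul (-(a / 2))
      |>.congr_deriv ?_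
    field_simp
  rw [integral_Ioo_eq_sub_of_hasDerivAt_of_nonneg zero_le_one
    ((ContinuousOn.log (by fun_prop) fun y hy => by linarith [hy.2]).const_mul _)
    hderiv fun x hx => div_nonneg ha.le (by linarith [hx.2]),
    one_add_div ha.ne', log_div (by linarith) ha.ne']
  ring_nf

end Integrals

noncomputable def sqrtDefect (a x : ℝ) : ℝ :=
  (√(a + 1 - x) - √(1 - x)) / (2 * (1 + x) * √(a + 1 - x))

section Defect

variable {a x : ℝ}

theorem one_div_mul_sqrt_mul_sqrt_eq (ha : 0 < a) (hx₀ : -1 < x) (hx₁ : x < 1) :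
    1 / ((1 + x) * √(1 - x) * √(a + 1 - x)) =
      1 / (2 * √(1 - x) * √(a + 1 - x)) + 1 / (2 * (1 + x)) - sqrtDefect a x := by
  have hs : 0 < √(1 - x) := sqrt_pos.2 (by linarith)
  have ht : 0 < √(a + 1 - x) := sqrt_pos.2 (by linarith)
  have h1x : 0 < 1 + x := by linarith
  have hsq : √(1 - x) ^ 2 = 1 - x := sq_sqrt (by linarith)
  rw [sqrtDefect]
  field_simp
  linear_combination -hsq

theorem sqrtDefect_nonneg (ha : 0 ≤ a) (hx₀ : -1 < x) : 0 ≤ sqrtDefect a x := by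
  have hst : √(1 - x) ≤ √(a + 1 - x) := sqrt_le_sqrt (by linarith)
  have h1x : 0 < 1 + x := by linarith
  exact div_nonneg (sub_nonneg.2 hst) (by positivity)

theorem sqrtDefect_le (ha : 0 < a) (hx₀ : 0 ≤ x) (hx₁ : x ≤ 1) :
    sqrtDefect a x ≤ a / (2 * (a + 1 - x)) := by
  set s := √(1 - x)
  set t := √(a + 1 - x)
  have hs : 0 ≤ s := sqrt_nonneg _
  have ht : 0 < t := sqrt_pos.2 (by linarith)
  have hst : s ≤ t := sqrt_le_sqrt (by linarith)
  have hsq : s ^ 2 = 1 - x := sq_sqrt (by linarith)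
  have htq : t ^ 2 = a + 1 - x := sq_sqrt (by linarith)
  have key : (t - s) * t ≤ a := by nlinarith [mul_le_mul_of_nonneg_left hst hs]
  rw [sqrtDefect, div_le_div_iff₀ (by positivity) (by linarith)]
  nlinarith [mul_le_mul_of_nonneg_right key ht.le, mul_nonneg (mul_nonneg ha.le hx₀) ht.le]

theorem integrableOn_sqrtDefect (ha : 0 < a) : IntegrableOn (sqrtDefect a) (Ioo 0 1) := by
  refine (ContinuousOn.integrableOn_Icc ?_).mono_set Ioo_subset_Icc_self
  refine ContinuousOn.div (by fun_prop) (by fun_prop) fun x hx => ?_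
  have : 0 < √(a + 1 - x) := sqrt_pos.2 (by linarith [hx.2])
  have : 0 < 1 + x := by linarith [hx.1]
  positivity

theorem integral_sqrtDefect_nonneg (ha : 0 ≤ a) :
    0 ≤ ∫ x in Ioo (0 : ℝ) 1, sqrtDefect a x :=
  setIntegral_nonneg measurableSet_Ioo fun _ hx => sqrtDefect_nonneg ha (by linarith [hx.1])

theorem integral_sqrtDefect_le (ha : 0 < a) :
    ∫ x in Ioo (0 : ℝ) 1, sqrtDefect a x ≤ a / 2 * log (1 + 1 / a) :=
  integral_div_two_mul_add_one_sub ha ▸ setIntegral_mono_on (integrableOn_sqrtDefect ha)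
    (integrableOn_div_two_mul_add_one_sub ha) measurableSet_Ioo
    fun _ hx => sqrtDefect_le ha hx.1.le hx.2.le

end Defect

theorem integral_one_div_mul_sqrt_mul_sqrt {a : ℝ} (ha : 0 < a) :
    ∫ x in Ioo (0 : ℝ) 1, 1 / ((1 + x) * √(1 - x) * √(a + 1 - x)) =
      log (1 + √(1 + a)) - log a / 2 + log 2 / 2 - ∫ x in Ioo (0 : ℝ) 1, sqrtDefect a x := by
  have hK := integrableOn_one_div_two_mul_sqrt_mul_sqrt ha
  have hc : IntegrableOn (fun x : ℝ => 1 / (2 * (1 + x))) (Ioo 0 1) :=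
    (ContinuousOn.integrableOn_Icc (continuousOn_const.div (by fun_prop) fun x hx => by
      linarith [hx.1])).mono_set Ioo_subset_Icc_self
  rw [setIntegral_congr_fun measurableSet_Ioo fun x hx =>
      one_div_mul_sqrt_mul_sqrt_eq ha (by linarith [hx.1]) hx.2,
    integral_sub ?_ (integrableOn_sqrtDefect ha), integral_add hK hc,
    integral_one_div_two_mul_sqrt_mul_sqrt ha, integral_one_div_two_mul_one_add]
  exact hK.add hc

section LogBounds

variable {a : ℝ}

theorem log_two_le_log_one_add_sqrt_one_add (ha : 0 ≤ a) : log 2 ≤ log (1 + √(1 + a)) := by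
  have : 1 ≤ √(1 + a) := one_le_sqrt.2 (by linarith)
  exact log_le_log two_pos (by linarith)

theorem log_one_add_sqrt_one_add_sub_log_two_le (ha : 0 < a) (ha1 : a ≤ 1) :
    log (1 + √(1 + a)) - log 2 ≤ a / 2 * log (1 + 1 / a) :=
  calc log (1 + √(1 + a)) - log 2 = log ((1 + √(1 + a)) / 2) :=
        (log_div (by positivity) two_ne_zero).symm
    _ ≤ (1 + √(1 + a)) / 2 - 1 := log_le_sub_one_of_pos (by positivity)
    _ ≤ a / 4 := by
        have : √(1 + a) ≤ 1 + a / 2 := sqrt_le_iff.2 ⟨by positivity, by nlinarith⟩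
        linarith
    _ ≤ a / 2 * log 2 := by nlinarith [log_two_gt_d9]
    _ ≤ a / 2 * log (1 + 1 / a) := by
        gcongr
        linarith [one_le_one_div ha ha1]

end LogBounds

theorem stmt10 (a : ℝ) (ha : 0 < a) (ha1 : a < 1) :
    |(∫ x in Set.Ioo (0:ℝ) 1,
        1 / ((1 + x) * Real.sqrt (1 - x) * Real.sqrt (a + 1 - x))) -
      (1 / 2) * Real.log (8 / a)| ≤ (a / 2) * Real.log (1 + 1 / a) := by
  have hlog8 : log (8 / a) = 3 * log 2 - log a := by
    rw [log_div (by norm_num) ha.ne', show (8 : ℝ) = 2 ^ 3 by norm_num, log_pow]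
    push_cast
    ring
  rw [integral_one_div_mul_sqrt_mul_sqrt ha, hlog8, abs_le]
  have hD₀ := integral_sqrtDefect_nonneg ha.le
  have hD₁ := integral_sqrtDefect_le ha
  have hP₀ := log_two_le_log_one_add_sqrt_one_add ha.le
  have hP₁ := log_one_add_sqrt_one_add_sub_log_two_le ha ha1.le
  constructor <;> linarith
end

section
/- For every real a > 0, ∫₀¹ dv / ((2 − v)√(v + a)(√v + √(v + a))) ≤ log(1 + 1/a). -/
open Real MeasureTheory

/-! On `(0, 1)` we have `2 - v ≥ 1` and `√v ≥ 0`, so the denominator is at least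
`√(v + a) ^ 2 = v + a`; and `∫₀¹ dv / (v + a) = log ((1 + a) / a)`. -/

lemma integral_Ioo_one_div_add {a b : ℝ} (ha : 0 < a) (hb : 0 ≤ b) :
    ∫ v in Set.Ioo (0:ℝ) b, 1 / (v + a) = Real.log ((b + a) / a) := by
  have h_not_mem : (0:ℝ) ∉ Set.uIcc a (b + a) := by
    rw [Set.uIcc_of_le (by linarith)]
    exact fun h => by linarith [h.1]
  rw [← integral_Ioc_eq_integral_Ioo, ← intervalIntegral.integral_of_le hb]
  simp only [one_div]
  rw [intervalIntegral.integral_comp_add_right (fun x => x⁻¹) a, zero_add,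
    integral_inv h_not_mem]

lemma one_div_two_sub_mul_sqrt_mul_le_one_div_add {a v : ℝ} (ha : 0 < a) (hv₀ : 0 ≤ v)
    (hv₁ : v ≤ 1) :
    1 / ((2 - v) * √(v + a) * (√v + √(v + a))) ≤ 1 / (v + a) := by
  have hva : 0 < v + a := by linarith
  have := Real.sqrt_nonneg v
  have : (0:ℝ) < 2 - v := by linarith
  apply one_div_le_one_div_of_le hva
  calc v + a = 1 * √(v + a) * (0 + √(v + a)) := by
        rw [one_mul, zero_add, Real.mul_self_sqrt hva.le]
    _ ≤ (2 - v) * √(v + a) * (√v + √(v + a)) := by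
        gcongr; linarith

lemma integrableOn_Ioo_one_div_add {a b : ℝ} (ha : 0 < a) :
    IntegrableOn (fun v : ℝ => 1 / (v + a)) (Set.Ioo 0 b) := by
  refine (ContinuousOn.integrableOn_Icc ?_).mono_set Set.Ioo_subset_Icc_self
  exact continuousOn_const.div (continuousOn_id.add continuousOn_const)
    fun x hx => (by linarith [hx.1] : 0 < x + a).ne'

theorem stmt11 (a : ℝ) (ha : 0 < a) :
    (∫ v in Set.Ioo (0:ℝ) 1,
        1 / ((2 - v) * Real.sqrt (v + a) * (Real.sqrt v + Real.sqrt (v + a))))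
      ≤ Real.log (1 + 1 / a) := by
  calc (∫ v in Set.Ioo (0:ℝ) 1,
        1 / ((2 - v) * Real.sqrt (v + a) * (Real.sqrt v + Real.sqrt (v + a))))
      ≤ ∫ v in Set.Ioo (0:ℝ) 1, 1 / (v + a) := by
        refine integral_mono_of_nonneg ?_ (integrableOn_Ioo_one_div_add ha) ?_
        all_goals filter_upwards [ae_restrict_mem measurableSet_Ioo] with v hv
        · have : 0 < √(v + a) := Real.sqrt_pos.2 (by linarith [hv.1])
          have : (0:ℝ) < 2 - v := by linarith [hv.2]
          positivity
        · exact one_div_two_sub_mul_sqrt_mul_le_one_div_add ha hv.1.le hv.2.le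
    _ = Real.log (1 + 1 / a) := by
        rw [integral_Ioo_one_div_add ha zero_le_one, add_div, div_self ha.ne', add_comm]
end

section
/- For each integer k ≥ 1, the homogeneous polynomial P_{2k}(X, Y) defined by P_{2k}(sin α, cos α) = 2^{k+1}(−1)^k (cos^{2k}(α) − cos^{2k}(α + 2π/3) − cos^{2k}(α − 2π/3)) for all α is divisible by 3X² − Y² in ℝ[X, Y]. -/
/-!
At `α = ±π/6` two of the three cosines are `±√3/2` and cancel in even power, while the third is
`cos (π/2) = 0`; so `P` vanishes at `(±1/2, √3/2)` and, being homogeneous, on the two lines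
`X = ±Y/√3`. Viewing `P` as a polynomial in `X` over `ℝ[Y]`, the elements `±Y/√3` are two
distinct roots in a domain, hence `(X - Y/√3)(X + Y/√3) = (3X² - Y²)/3` divides `P`.
-/

open Real

theorem Polynomial.X_sub_C_mul_X_sub_C_dvd_of_isRoot {A : Type*} [CommRing A] [IsDomain A]
    {p : Polynomial A} {a b : A} (hab : a ≠ b) (ha : p.IsRoot a) (hb : p.IsRoot b) :
    (X - C a) * (X - C b) ∣ p := by
  obtain ⟨q, rfl⟩ := dvd_iff_isRoot.mpr ha
  refine mul_dvd_mul_left _ (dvd_iff_isRoot.mpr ?_)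
  simpa [IsRoot, sub_ne_zero.mpr hab.symm] using hb

namespace MvPolynomial

theorem IsHomogeneous.eval_smul {σ R : Type*} [CommSemiring R] {φ : MvPolynomial σ R} {n : ℕ}
    (hφ : φ.IsHomogeneous n) (c : R) (x : σ → R) : eval (c • x) φ = c ^ n * eval x φ := by
  rw [eval_eq, eval_eq, Finset.mul_sum]
  refine Finset.sum_congr rfl fun d hd => ?_
  have hdeg : ∑ i ∈ d.support, d i = n := by
    simpa [Finsupp.weight_apply, Finsupp.sum] using hφ (mem_support_iff.mp hd)
  simp only [Pi.smul_apply, smul_eq_mul, mul_pow, Finset.prod_mul_distrib,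
    Finset.prod_pow_eq_pow_sum, hdeg]
  ring

theorem IsHomogeneous.eval_eq_zero_on_line {K : Type*} [Field K] {P : MvPolynomial (Fin 2) K}
    {n : ℕ} (hP : P.IsHomogeneous n) {a y₀ : K} (hy₀ : y₀ ≠ 0) (h : eval ![a * y₀, y₀] P = 0)
    (y : K) : eval ![a * y, y] P = 0 := by
  have hline : ![a * y, y] = (y / y₀) • ![a * y₀, y₀] := by
    ext i; fin_cases i <;> simp <;> field_simp
  rw [hline, hP.eval_smul, h, mul_zero]

section Plane

variable {R : Type*} [CommRing R] [IsDomain R] [Infinite R]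

theorem isRoot_finSuccEquiv_of_eval_eq_zero_on_line {P : MvPolynomial (Fin 2) R} {a : R}
    (h : ∀ y, eval ![a * y, y] P = 0) : (finSuccEquiv R 1 P).IsRoot (C a * X 0) := by
  refine MvPolynomial.funext fun x : Fin 1 → R => ?_
  have hx : x = fun _ => x 0 := _root_.funext fun i => congrArg x (Subsingleton.elim i 0)
  rw [map_zero, eval_polynomial_eval_finSuccEquiv, hx, ← h (x 0)]
  refine congrArg (fun v => eval v P) ?_
  ext i
  fin_cases i
  · simp
  · rfl

theorem mul_dvd_of_eval_eq_zero_on_lines {P : MvPolynomial (Fin 2) R} {a b : R} (hab : a ≠ b)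
    (ha : ∀ y, eval ![a * y, y] P = 0) (hb : ∀ y, eval ![b * y, y] P = 0) :
    (X 0 - C a * X 1) * (X 0 - C b * X 1) ∣ P := by
  have hroots : C a * X 0 ≠ (C b * X 0 : MvPolynomial (Fin 1) R) :=
    fun h => hab (C_injective _ _ (mul_right_cancel₀ (X_ne_zero 0) h))
  have hfactor : finSuccEquiv R 1 ((X 0 - C a * X 1) * (X 0 - C b * X 1)) =
      (Polynomial.X - Polynomial.C (C a * X 0)) * (Polynomial.X - Polynomial.C (C b * X 0)) := by
    have hX1 : (X 1 : MvPolynomial (Fin 2) R) = X (Fin.succ 0) := rfl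
    have hC (r : R) : finSuccEquiv R 1 (C r) = Polynomial.C (C r) := (finSuccEquiv R 1).commutes r
    simp [hX1, hC, finSuccEquiv_X_zero, finSuccEquiv_X_succ]
  rw [← map_dvd_iff (finSuccEquiv R 1), hfactor]
  exact Polynomial.X_sub_C_mul_X_sub_C_dvd_of_isRoot hroots
    (isRoot_finSuccEquiv_of_eval_eq_zero_on_line ha) (isRoot_finSuccEquiv_of_eval_eq_zero_on_line hb)

end Plane

theorem X_sub_C_mul_X_sub_C_neg_eq_of_sq_eq {K : Type*} [Field K] [CharZero K] {c : K}
    (hc : c ^ 2 = 3⁻¹) :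
    (X 0 - C c * X 1) * (X 0 - C (-c) * X 1) =
      C 3⁻¹ * (3 * X 0 ^ 2 - X 1 ^ 2 : MvPolynomial (Fin 2) K) := by
  have hsq : C c ^ 2 = (C 3⁻¹ : MvPolynomial (Fin 2) K) := by rw [← map_pow, hc]
  have hthree : (C 3⁻¹ : MvPolynomial (Fin 2) K) * 3 = 1 := by
    rw [← map_ofNat C 3, ← map_mul, inv_mul_cancel₀ three_ne_zero, map_one]
  rw [map_neg]
  linear_combination (-X 0 ^ 2) * hthree - X 1 ^ 2 * hsq

end MvPolynomial

open MvPolynomial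

theorem stmt15 (k : ℕ) (hk : 1 ≤ k) (P : MvPolynomial (Fin 2) ℝ)
    (hhom : P.IsHomogeneous (2 * k))
    (heval : ∀ α : ℝ,
      MvPolynomial.eval (fun i => if i = 0 then sin α else cos α) P
        = 2 ^ (k + 1) * (-1) ^ k *
          (cos α ^ (2 * k) - cos (α + 2 * π / 3) ^ (2 * k) - cos (α - 2 * π / 3) ^ (2 * k))) :
    ∃ Q : MvPolynomial (Fin 2) ℝ,
      P = (3 * (MvPolynomial.X 0) ^ 2 - (MvPolynomial.X 1) ^ 2) * Q := by
  have hpoint (x y : ℝ) : (fun i : Fin 2 => if i = 0 then x else y) = ![x, y] := by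
    ext i; fin_cases i <;> rfl
  have hcos_pow_zero : cos (π / 2) ^ (2 * k) = 0 := by
    rw [cos_pi_div_two, zero_pow (by omega)]
  have hplus : eval ![1 / 2, √3 / 2] P = 0 := by
    have h := heval (π / 6)
    rw [hpoint, show π / 6 + 2 * π / 3 = π - π / 6 by ring,
      show π / 6 - 2 * π / 3 = -(π / 2) by ring, cos_neg, cos_pi_sub,
      (even_two_mul k).neg_pow, hcos_pow_zero, sin_pi_div_six, cos_pi_div_six] at h
    rw [h]; ring
  have hminus : eval ![-(1 / 2), √3 / 2] P = 0 := by
    have h := heval (-(π / 6))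
    rw [hpoint, show -(π / 6) + 2 * π / 3 = π / 2 by ring,
      show -(π / 6) - 2 * π / 3 = -(π - π / 6) by ring, cos_neg, cos_neg, cos_pi_sub,
      (even_two_mul k).neg_pow, hcos_pow_zero, sin_neg, sin_pi_div_six, cos_pi_div_six] at h
    rw [h]; ring
  have hy₀ : √3 / 2 ≠ 0 := by positivity
  have hab : √3 / 3 ≠ -(√3 / 3) := (neg_lt_self (by positivity)).ne'
  have hslope : √3 / 3 * (√3 / 2) = 1 / 2 := by
    rw [div_mul_div_comm, mul_self_sqrt zero_le_three]; norm_num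
  obtain ⟨Q, hQ⟩ := mul_dvd_of_eval_eq_zero_on_lines hab
    (hhom.eval_eq_zero_on_line hy₀ (by rwa [hslope]))
    (hhom.eval_eq_zero_on_line hy₀ (by rwa [neg_mul, hslope]))
  refine ⟨C 3⁻¹ * Q, ?_⟩
  rw [hQ, X_sub_C_mul_X_sub_C_neg_eq_of_sq_eq (by rw [div_pow, sq_sqrt zero_le_three]; norm_num)]
  ring
end
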